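/- In the double interferometer, the sum over all four path histories of sequential weak values equals 1: (E,B)_w + (F,B)_w + (E,C)_w + (F,C)_w = 1, and in particular one of them, (F,B)_w = −1/2, is negative. -/

import Mathlib

/-! The four sequential weak values share the denominator `⟨D|U₃U₂U₁|A⟩`, and their numerators add
up to it because `P_B + P_C` fixes `U₁|A⟩` and `P_E + P_F` fixes `U₂U₁|A⟩`. For `(F,B)_w`, with
`s = 1/√2` the history through `B` and `F` reaches `D` with amplitude `s³`, while the total
amplitude is `-2s³`, all of it through `C`, since the two histories through `B` cancel at `D`. -/

open scoped InnerProductSpace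

/-- The rank-one projector `|v⟩⟨v|` onto a (unit) vector `v`. -/
noncomputable def proj {H : Type*} [NormedAddCommGroup H] [InnerProductSpace ℂ H]
    (v : H) : H →ₗ[ℂ] H :=
  ((innerSL ℂ v).smulRight v).toLinearMap

section

variable {H : Type*} [NormedAddCommGroup H] [InnerProductSpace ℂ H]

theorem proj_apply (v x : H) : proj v x = ⟪v, x⟫_ℂ • v := rfl

theorem Orthonormal.pair {n : ℕ} {v : Fin n → H} (hv : Orthonormal ℂ v) {i j : Fin n}
    (hij : i ≠ j) : Orthonormal ℂ ![v i, v j] := by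
  have hinj : Function.Injective ![i, j] := by
    intro a b
    fin_cases a <;> fin_cases b <;> simp [hij, hij.symm]
  convert hv.comp _ hinj using 1
  ext k
  fin_cases k <;> rfl

theorem Orthonormal.inner_fst_smul_add_smul {u w : H} (h : Orthonormal ℂ ![u, w]) (a b : ℂ) :
    ⟪u, a • u + b • w⟫_ℂ = a := by
  simpa only [Fin.sum_univ_two, Matrix.cons_val_zero, Matrix.cons_val_one, Matrix.cons_val_fin_one,
    one_smul, Matrix.head_cons] using h.inner_right_fintype ![a, b] 0

theorem Orthonormal.inner_snd_smul_add_smul {u w : H} (h : Orthonormal ℂ ![u, w]) (a b : ℂ) :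
    ⟪w, a • u + b • w⟫_ℂ = b := by
  simpa only [Fin.sum_univ_two, Matrix.cons_val_zero, Matrix.cons_val_one, Matrix.cons_val_fin_one,
    one_smul, Matrix.head_cons] using h.inner_right_fintype ![a, b] 1

theorem Orthonormal.proj_fst_smul_add_smul {u w : H} (h : Orthonormal ℂ ![u, w]) (a b : ℂ) :
    proj u (a • u + b • w) = a • u := by
  rw [proj_apply, h.inner_fst_smul_add_smul]

theorem Orthonormal.proj_snd_smul_add_smul {u w : H} (h : Orthonormal ℂ ![u, w]) (a b : ℂ) :
    proj w (a • u + b • w) = b • w := by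
  rw [proj_apply, h.inner_snd_smul_add_smul]

theorem Orthonormal.proj_add_proj_of_mem_span {u w x : H} (h : Orthonormal ℂ ![u, w])
    (hx : x ∈ Submodule.span ℂ {u, w}) : proj u x + proj w x = x := by
  obtain ⟨a, b, rfl⟩ := Submodule.mem_span_pair.mp hx
  rw [h.proj_fst_smul_add_smul, h.proj_snd_smul_add_smul]

/-- `(Y,X)_w = seqWeakValue D A U₁ U₂ U₃ P_X P_Y`. -/
noncomputable def seqWeakValue (d a : H) (U₁ U₂ U₃ PX PY : H →ₗ[ℂ] H) : ℂ :=
  ⟪d, U₃ (PY (U₂ (PX (U₁ a))))⟫_ℂ / ⟪d, U₃ (U₂ (U₁ a))⟫_ℂ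

theorem seqWeakValue_sum_eq_one {d a : H} {U₁ U₂ U₃ PB PC PE PF : H →ₗ[ℂ] H}
    (hd : ⟪d, U₃ (U₂ (U₁ a))⟫_ℂ ≠ 0) (hBC : PB (U₁ a) + PC (U₁ a) = U₁ a)
    (hEF : PE (U₂ (U₁ a)) + PF (U₂ (U₁ a)) = U₂ (U₁ a)) :
    seqWeakValue d a U₁ U₂ U₃ PB PE + seqWeakValue d a U₁ U₂ U₃ PB PF
      + seqWeakValue d a U₁ U₂ U₃ PC PE + seqWeakValue d a U₁ U₂ U₃ PC PF = 1 := by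
  have hsum : ⟪d, U₃ (PE (U₂ (PB (U₁ a))))⟫_ℂ + ⟪d, U₃ (PF (U₂ (PB (U₁ a))))⟫_ℂ
      + ⟪d, U₃ (PE (U₂ (PC (U₁ a))))⟫_ℂ + ⟪d, U₃ (PF (U₂ (PC (U₁ a))))⟫_ℂ
      = ⟪d, U₃ (U₂ (U₁ a))⟫_ℂ := by
    have hU₂ : U₂ (U₁ a) = PE (U₂ (PB (U₁ a))) + PF (U₂ (PB (U₁ a)))
        + (PE (U₂ (PC (U₁ a))) + PF (U₂ (PC (U₁ a)))) := by
      calc U₂ (U₁ a) = PE (U₂ (PB (U₁ a) + PC (U₁ a))) + PF (U₂ (PB (U₁ a) + PC (U₁ a))) := by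
            rw [hBC, hEF]
        _ = _ := by simp only [map_add]; abel
    rw [hU₂]
    simp only [map_add, inner_add_right, add_assoc]
  simp only [seqWeakValue, ← add_div, hsum, div_self hd]

end

theorem double_interferometer_sum_over_paths_general
    {H : Type*} [NormedAddCommGroup H] [InnerProductSpace ℂ H]
    (vA vB vC vE vF vD vD' : H)
    (horth : Orthonormal ℂ ![vA, vB, vC, vE, vF, vD, vD'])
    (U1 U2 U3 : H →ₗ[ℂ] H)
    (h1 : U1 vA = (Real.sqrt 2 : ℂ)⁻¹ • (vB + vC))
    (h2 : U2 vB = (Real.sqrt 2 : ℂ)⁻¹ • (vE + vF))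
    (h3 : U2 vC = (Real.sqrt 2 : ℂ)⁻¹ • (vE - vF))
    (h4 : U3 vE = (Real.sqrt 2 : ℂ)⁻¹ • (-vD + vD'))
    (h5 : U3 vF = (Real.sqrt 2 : ℂ)⁻¹ • (vD + vD'))
    (hD : ⟪vD, U3 (U2 (U1 vA))⟫_ℂ ≠ 0)
    :
    ⟪vD, U3 (proj vE (U2 (proj vB (U1 vA))))⟫_ℂ / ⟪vD, U3 (U2 (U1 vA))⟫_ℂ
      + ⟪vD, U3 (proj vF (U2 (proj vB (U1 vA))))⟫_ℂ / ⟪vD, U3 (U2 (U1 vA))⟫_ℂ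
      + ⟪vD, U3 (proj vE (U2 (proj vC (U1 vA))))⟫_ℂ / ⟪vD, U3 (U2 (U1 vA))⟫_ℂ
      + ⟪vD, U3 (proj vF (U2 (proj vC (U1 vA))))⟫_ℂ / ⟪vD, U3 (U2 (U1 vA))⟫_ℂ = 1
    ∧ ⟪vD, U3 (proj vF (U2 (proj vB (U1 vA))))⟫_ℂ / ⟪vD, U3 (U2 (U1 vA))⟫_ℂ = -(1 / 2) := by
  set s : ℂ := (Real.sqrt 2 : ℂ)⁻¹
  have hs : s ≠ 0 := inv_ne_zero (by exact_mod_cast (Real.sqrt_pos.2 two_pos).ne')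
  have hBC : Orthonormal ℂ ![vB, vC] := horth.pair (i := 1) (j := 2) (by decide)
  have hEF : Orthonormal ℂ ![vE, vF] := horth.pair (i := 3) (j := 4) (by decide)
  have hDD' : Orthonormal ℂ ![vD, vD'] := horth.pair (i := 5) (j := 6) (by decide)
  have hDE : ⟪vD, U3 vE⟫_ℂ = -s := by
    rw [h4, smul_add, smul_neg, ← neg_smul, hDD'.inner_fst_smul_add_smul]
  have hDF : ⟪vD, U3 vF⟫_ℂ = s := by
    rw [h5, smul_add, hDD'.inner_fst_smul_add_smul]
  have hU2U1 : U2 (U1 vA) ∈ Submodule.span ℂ {vE, vF} := by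
    refine Submodule.mem_span_pair.mpr ⟨2 * s ^ 2, 0, ?_⟩
    rw [h1, map_smul, map_add, h2, h3]
    module
  have hamp : ⟪vD, U3 (U2 (U1 vA))⟫_ℂ = -(2 * s ^ 3) := by
    simp only [h1, h2, h3, map_add, map_sub, map_smul, inner_add_right, inner_sub_right,
      inner_smul_right, hDE, hDF]
    ring
  have hampFB : ⟪vD, U3 (proj vF (U2 (proj vB (U1 vA))))⟫_ℂ = s ^ 3 := by
    rw [h1, smul_add, hBC.proj_fst_smul_add_smul, map_smul, h2, map_smul, smul_add,
      hEF.proj_snd_smul_add_smul]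
    simp only [map_smul, inner_smul_right, hDF]
    ring
  refine ⟨seqWeakValue_sum_eq_one hD ?_ (hEF.proj_add_proj_of_mem_span hU2U1), ?_⟩
  · rw [h1, smul_add, hBC.proj_fst_smul_add_smul, hBC.proj_snd_smul_add_smul]
  · rw [hampFB, hamp]
    field_simp

/-- the sum over all four path histories of the sequential weak values
equals 1, and (F,B)_w = -1/2 is negative. -/
theorem double_interferometer_sum_over_paths
    {H : Type*} [NormedAddCommGroup H] [InnerProductSpace ℂ H] [FiniteDimensional ℂ H]
    (vA vB vC vE vF vD vD' : H)
    (horth : Orthonormal ℂ ![vA, vB, vC, vE, vF, vD, vD'])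
    (U1 U2 U3 : H →ₗ[ℂ] H)
    (hU1 : U1 ∈ unitary (H →ₗ[ℂ] H)) (hU2 : U2 ∈ unitary (H →ₗ[ℂ] H))
    (hU3 : U3 ∈ unitary (H →ₗ[ℂ] H))
    (h1 : U1 vA = (Real.sqrt 2 : ℂ)⁻¹ • (vB + vC))
    (h2 : U2 vB = (Real.sqrt 2 : ℂ)⁻¹ • (vE + vF))
    (h3 : U2 vC = (Real.sqrt 2 : ℂ)⁻¹ • (vE - vF))
    (h4 : U3 vE = (Real.sqrt 2 : ℂ)⁻¹ • (-vD + vD'))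
    (h5 : U3 vF = (Real.sqrt 2 : ℂ)⁻¹ • (vD + vD'))
    (hD : ⟪vD, U3 (U2 (U1 vA))⟫_ℂ ≠ 0)
    :
    ⟪vD, U3 (proj vE (U2 (proj vB (U1 vA))))⟫_ℂ / ⟪vD, U3 (U2 (U1 vA))⟫_ℂ
      + ⟪vD, U3 (proj vF (U2 (proj vB (U1 vA))))⟫_ℂ / ⟪vD, U3 (U2 (U1 vA))⟫_ℂ
      + ⟪vD, U3 (proj vE (U2 (proj vC (U1 vA))))⟫_ℂ / ⟪vD, U3 (U2 (U1 vA))⟫_ℂ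
      + ⟪vD, U3 (proj vF (U2 (proj vC (U1 vA))))⟫_ℂ / ⟪vD, U3 (U2 (U1 vA))⟫_ℂ = 1
    ∧ ⟪vD, U3 (proj vF (U2 (proj vB (U1 vA))))⟫_ℂ / ⟪vD, U3 (U2 (U1 vA))⟫_ℂ = -(1 / 2) :=
  double_interferometer_sum_over_paths_general vA vB vC vE vF vD vD' horth U1 U2 U3 h1 h2 h3 h4 h5
    hD
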